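/- Let n be a positive odd integer, let U be a rational spectral unit of finite order with Fourier coefficients (ξ_l), and let j be a positive divisor of n with 0 < j < n. Then ξ_j^{n/j} = 1 or ξ_j^{n/j} = −1; that is, either ξ_j or −ξ_j is an (n/j)-th root of unity. -/

import Mathlib

/-!
With `ψ = ZMod.stdAddChar`, the vector `i ↦ ψ(-l·i)` is an eigenvector of the circulant matrix
`M(u)` with eigenvalue `ξ_l`, so `M(u)^m = 1` makes every `ξ_l` a root of unity. For `j ∣ n`,
`ξ_j = ∑ u(t) ψ(j)^t` is a rational combination of powers of `ψ(j)`, a primitive `d`-th root of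
unity with `d = n / j`, so it lies in the cyclotomic field `ℚ(ζ_d)`. For odd `d` the roots of
unity in `ℚ(ζ_d)` are the `2d`-th roots of unity, hence `ξ_j^(2d) = 1`, i.e. `ξ_j^d = ±1`.
-/

open Matrix

/-- The Fourier coefficient of `u : ZMod n → ℂ` at `l`:
`ξ_l = ∑_{t} u(t) · exp(2πi·l·t/n)`. -/
noncomputable def zmodFourier (n : ℕ) [NeZero n] (u : ZMod n → ℂ) (l : ZMod n) : ℂ :=
  ∑ t : ZMod n, u t * Complex.exp (2 * Real.pi * Complex.I * ((l.val : ℂ) * (t.val : ℂ)) / n)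

open IntermediateField

theorem IsPrimitiveRoot.adjoin_simple_isCyclotomicExtension {K L : Type*} [Field K] [Field L]
    [Algebra K L] {n : ℕ} [NeZero n] {ζ : L} (hζ : IsPrimitiveRoot ζ n) :
    IsCyclotomicExtension {n} K K⟮ζ⟯ := by
  change IsCyclotomicExtension {n} K K⟮ζ⟯.toSubalgebra
  rw [adjoin_simple_toSubalgebra_of_isAlgebraic
    (hζ.isIntegral (NeZero.pos n)).tower_top.isAlgebraic]
  exact hζ.adjoin_isCyclotomicExtension K

theorem IsCyclotomicExtension.Rat.pow_two_mul_eq_one {d : ℕ} [NeZero d] (hd : Odd d)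
    {K : Type*} [Field K] [NumberField K] [IsCyclotomicExtension {d} ℚ K] {x : K}
    (hx : IsOfFinOrder x) : x ^ (2 * d) = 1 := by
  have : NeZero (orderOf x) := ⟨hx.orderOf_pos.ne'⟩
  have hdvd := NumberField.Units.dvd_torsionOrder_of_isPrimitiveRoot (IsPrimitiveRoot.orderOf x)
  rw [IsCyclotomicExtension.Rat.torsionOrder_eq (n := d),
    if_neg (Nat.not_even_iff_odd.mpr hd)] at hdvd
  exact orderOf_dvd_iff_pow_eq_one.mp hdvd

theorem IsPrimitiveRoot.pow_eq_one_or_neg_one_of_mem_adjoin {L : Type*} [Field L] [CharZero L]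
    {d : ℕ} [NeZero d] (hd : Odd d) {μ x : L} (hμ : IsPrimitiveRoot μ d) (hx : x ∈ ℚ⟮μ⟯)
    (hfin : IsOfFinOrder x) : x ^ d = 1 ∨ x ^ d = -1 := by
  have : IsCyclotomicExtension {d} ℚ ℚ⟮μ⟯ := hμ.adjoin_simple_isCyclotomicExtension
  have := IsCyclotomicExtension.numberField {d} ℚ ℚ⟮μ⟯
  have hxK : IsOfFinOrder (⟨x, hx⟩ : ℚ⟮μ⟯) :=
    ((algebraMap ℚ⟮μ⟯ L).injective.isOfFinOrder_iff
      (f := (algebraMap ℚ⟮μ⟯ L : ℚ⟮μ⟯ →* L))).mp hfin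
  have h := IsCyclotomicExtension.Rat.pow_two_mul_eq_one hd hxK
  rw [← mul_self_eq_one_iff, ← pow_add, ← two_mul]
  simpa using congrArg Subtype.val h

theorem Matrix.pow_mulVec_of_mulVec_eq_smul {ι R : Type*} [Fintype ι] [DecidableEq ι]
    [CommSemiring R] {A : Matrix ι ι R} {v : ι → R} {c : R} (h : A *ᵥ v = c • v) (k : ℕ) :
    A ^ k *ᵥ v = c ^ k • v := by
  induction k with
  | zero => simp
  | succ k ih => rw [pow_succ, ← mulVec_mulVec, h, mulVec_smul, ih, smul_smul, pow_succ']

section Fourier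

variable {n : ℕ} [NeZero n]

theorem ZMod.isPrimitiveRoot_stdAddChar_natCast {j : ℕ} (hj : j ∣ n) :
    IsPrimitiveRoot (stdAddChar (j : ZMod n)) (n / j) := by
  have hone : IsPrimitiveRoot (stdAddChar (1 : ZMod n)) n := by
    have h := stdAddChar_coe (N := n) 1
    rw [Int.cast_one, Int.cast_one, mul_one] at h
    exact h ▸ Complex.isPrimitiveRoot_exp n (NeZero.ne n)
  rw [← nsmul_one, AddChar.map_nsmul_eq_pow]
  exact hone.pow (NeZero.pos n) (Nat.mul_div_cancel' hj).symm

theorem zmodFourier_eq_sum_stdAddChar (u : ZMod n → ℂ) (l : ZMod n) :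
    zmodFourier n u l = ∑ t, u t * ZMod.stdAddChar (l * t) := by
  refine Finset.sum_congr rfl fun t _ => ?_
  have hlt : l * t = ((l.val * t.val : ℕ) : ZMod n) := by simp
  rw [hlt, ZMod.stdAddChar_apply, ZMod.toCircle_natCast]
  push_cast
  ring_nf

theorem zmodFourier_eq_sum_pow (u : ZMod n → ℂ) (l : ZMod n) :
    zmodFourier n u l = ∑ t, u t * ZMod.stdAddChar l ^ t.val := by
  rw [zmodFourier_eq_sum_stdAddChar]
  refine Finset.sum_congr rfl fun t _ => ?_
  rw [← AddChar.map_nsmul_eq_pow, nsmul_eq_mul, ZMod.natCast_zmod_val, mul_comm t l]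

theorem circulant_mulVec_stdAddChar (u : ZMod n → ℂ) (l : ZMod n) :
    circulant u *ᵥ (fun i => ZMod.stdAddChar (-(l * i))) =
      zmodFourier n u l • fun i => ZMod.stdAddChar (-(l * i)) := by
  funext i
  simp only [mulVec, dotProduct, circulant_apply, Pi.smul_apply, smul_eq_mul,
    zmodFourier_eq_sum_stdAddChar, Finset.sum_mul]
  refine Fintype.sum_equiv (Equiv.subLeft i) _ _ fun k => ?_
  rw [Equiv.subLeft_apply, mul_assoc, ← AddChar.map_add_eq_mul]
  congr 2
  ring

theorem zmodFourier_pow_eq_one_of_circulant_pow_eq_one {u : ZMod n → ℂ} {m : ℕ}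
    (hm : circulant u ^ m = 1) (l : ZMod n) : zmodFourier n u l ^ m = 1 := by
  have h := congrFun (pow_mulVec_of_mulVec_eq_smul (circulant_mulVec_stdAddChar u l) m) 0
  simpa [hm] using h.symm

theorem zmodFourier_ratCast_mem_adjoin (u : ZMod n → ℚ) (l : ZMod n) :
    zmodFourier n (fun t => (u t : ℂ)) l ∈ ℚ⟮(ZMod.stdAddChar l : ℂ)⟯ := by
  rw [zmodFourier_eq_sum_pow]
  exact sum_mem fun t _ =>
    mul_mem (SubfieldClass.ratCast_mem _ _) (pow_mem (mem_adjoin_simple_self ℚ _) _)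

end Fourier

theorem odd_spectral_unit_divisor_general
    (n : ℕ) [NeZero n] (hnodd : Odd n)
    (u : ZMod n → ℚ)
    (hfin : ∃ m : ℕ, 1 ≤ m ∧ Matrix.circulant u ^ m = 1)
    (j : ℕ) (hjdvd : j ∣ n) :
    (zmodFourier n (fun t => (u t : ℂ)) (j : ZMod n)) ^ (n / j) = 1 ∨
    (zmodFourier n (fun t => (u t : ℂ)) (j : ZMod n)) ^ (n / j) = -1 := by
  obtain ⟨m, hm, hmpow⟩ := hfin
  have : NeZero (n / j) := ⟨(Nat.div_ne_zero_iff_of_dvd hjdvd).mpr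
    ⟨NeZero.ne n, ne_zero_of_dvd_ne_zero (NeZero.ne n) hjdvd⟩⟩
  have hcirc : circulant (fun t => (u t : ℂ)) ^ m = 1 := by
    change (Rat.castHom ℂ).mapMatrix (circulant u) ^ m = 1
    rw [← map_pow, hmpow, map_one]
  refine (ZMod.isPrimitiveRoot_stdAddChar_natCast hjdvd).pow_eq_one_or_neg_one_of_mem_adjoin
    (hnodd.of_dvd_nat (Nat.div_dvd_of_dvd hjdvd)) (zmodFourier_ratCast_mem_adjoin u j) ?_
  exact isOfFinOrder_iff_pow_eq_one.mpr
    ⟨m, hm, zmodFourier_pow_eq_one_of_circulant_pow_eq_one hcirc _⟩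

/-- For `n` odd and a rational spectral unit of finite order, if `j` is a strict positive
divisor of `n`, then `ξ_j ^ (n/j) = 1` or `ξ_j ^ (n/j) = -1`. -/
theorem odd_spectral_unit_divisor
    (n : ℕ) [NeZero n] (hn : 0 < n) (hnodd : Odd n)
    (u : ZMod n → ℚ)
    (hunit : Matrix.circulant u * (Matrix.circulant u)ᵀ = 1)
    (hfin : ∃ m : ℕ, 1 ≤ m ∧ Matrix.circulant u ^ m = 1)
    (j : ℕ) (hjdvd : j ∣ n) (hjpos : 0 < j) (hjlt : j < n) :
    (zmodFourier n (fun t => (u t : ℂ)) (j : ZMod n)) ^ (n / j) = 1 ∨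
    (zmodFourier n (fun t => (u t : ℂ)) (j : ZMod n)) ^ (n / j) = -1 :=
  odd_spectral_unit_divisor_general n hnodd u hfin j hjdvd
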